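/- Let P₀ = [[2,0,0,-1,-1,0],[1,1,0,-1,-1,0],[1,0,1,-1,-1,0],[1,0,0,0,-1,0],[1,0,0,-1,0,0],[0,0,0,0,0,0]], P₁ = [[1,1,0,-1,0,-1],[0,2,0,-1,0,-1],[0,1,1,-1,0,-1],[0,1,0,0,0,-1],[0,0,0,0,0,0],[0,1,0,-1,0,0]], P₂ = [[1,0,1,0,-1,-1],[0,1,1,0,-1,-1],[0,0,2,0,-1,-1],[0,0,0,0,0,0],[0,0,1,0,0,-1],[0,0,1,0,-1,0]] be 6×6 integer matrices with rows and columns indexed by 0, …, 5, extended cyclically by P_n := P_j for n ≡ j (mod 3). Define v⁽⁰⁾ = (1,0,0,0,0,0)ᵗ ∈ ℤ⁶ and v⁽ⁱ⁺¹⁾ = P_i·v⁽ⁱ⁾ for i ≥ 0. Let S₀ = {(μ,ν) : μ ∈ {0,1,2}, ν ∈ {0,1,2,3,4}} ∪ {(3,4), (0,5)}, S₁ = {(μ,ν) : μ ∈ {0,1,2}, ν ∈ {0,1,2,3,5}} ∪ {(3,5), (1,4)}, S₂ = {(μ,ν) : μ ∈ {0,1,2}, ν ∈ {0,1,2,4,5}}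 ∪ {(4,5), (2,3)}. Then for every i ≥ 0: if i ≡ 2 (mod 3), then v⁽ⁱ⁺¹⁾₃ + v⁽ⁱ⁺¹⁾₄ ≤ v⁽ⁱ⁺¹⁾_μ + v⁽ⁱ⁺¹⁾_ν for all (μ,ν) ∈ S₀; if i ≡ 0 (mod 3), then v⁽ⁱ⁺¹⁾₃ + v⁽ⁱ⁺¹⁾₅ ≤ v⁽ⁱ⁺¹⁾_μ + v⁽ⁱ⁺¹⁾_ν for all (μ,ν) ∈ S₁; if i ≡ 1 (mod 3), then v⁽ⁱ⁺¹⁾₄ + v⁽ⁱ⁺¹⁾₅ ≤ v⁽ⁱ⁺¹⁾_μ + v⁽ⁱ⁺¹⁾_ν for all (μ,ν) ∈ S₂. -/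

import Mathlib

def P0 : Matrix (Fin 6) (Fin 6) ℤ :=
  !![2, 0, 0, -1, -1, 0;
     1, 1, 0, -1, -1, 0;
     1, 0, 1, -1, -1, 0;
     1, 0, 0,  0, -1, 0;
     1, 0, 0, -1,  0, 0;
     0, 0, 0,  0,  0, 0]

def P1 : Matrix (Fin 6) (Fin 6) ℤ :=
  !![1, 1, 0, -1, 0, -1;
     0, 2, 0, -1, 0, -1;
     0, 1, 1, -1, 0, -1;
     0, 1, 0,  0, 0, -1;
     0, 0, 0,  0, 0,  0;
     0, 1, 0, -1, 0,  0]

def P2 : Matrix (Fin 6) (Fin 6) ℤ :=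
  !![1, 0, 1, 0, -1, -1;
     0, 1, 1, 0, -1, -1;
     0, 0, 2, 0, -1, -1;
     0, 0, 0, 0,  0,  0;
     0, 0, 1, 0,  0, -1;
     0, 0, 1, 0, -1,  0]


/-- Cyclic extension `P_n := P_{n mod 3}` of the three transition matrices. -/
def Pseq (n : ℕ) : Matrix (Fin 6) (Fin 6) ℤ := ![P0, P1, P2] (Fin.ofNat 3 n)

/-- Index pairs of the quadratic monomials generating the monomial ideal `I₀`. -/
def S0 (μ ν : Fin 6) : Prop :=
  ((μ : ℕ) < 3 ∧ (ν : ℕ) ≤ 4) ∨ (μ = 3 ∧ ν = 4) ∨ (μ = 0 ∧ ν = 5)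

/-- Index pairs of the quadratic monomials generating the monomial ideal `I₁`. -/
def S1 (μ ν : Fin 6) : Prop :=
  ((μ : ℕ) < 3 ∧ ((ν : ℕ) ≤ 3 ∨ ν = 5)) ∨ (μ = 3 ∧ ν = 5) ∨ (μ = 1 ∧ ν = 4)

/-- Index pairs of the quadratic monomials generating the monomial ideal `I₂`. -/
def S2 (μ ν : Fin 6) : Prop :=
  ((μ : ℕ) < 3 ∧ ((ν : ℕ) ≤ 2 ∨ 4 ≤ (ν : ℕ))) ∨ (μ = 4 ∧ ν = 5) ∨ (μ = 2 ∧ ν = 3)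

lemma Pseq_eq0 (i : ℕ) (h : i % 3 = 0) : Pseq i = P0 := by
  have : Fin.ofNat 3 i = 0 := by ext; simp [Fin.val_natCast, h]
  rw [Pseq, this]; rfl

lemma Pseq_eq1 (i : ℕ) (h : i % 3 = 1) : Pseq i = P1 := by
  have : Fin.ofNat 3 i = 1 := by ext; simp [Fin.val_natCast, h]
  rw [Pseq, this]; rfl

lemma Pseq_eq2 (i : ℕ) (h : i % 3 = 2) : Pseq i = P2 := by
  have : Fin.ofNat 3 i = 2 := by ext; simp [Fin.val_natCast, h]
  rw [Pseq, this]; rfl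

lemma P0_mv0 (w : Fin 6 → ℤ) : P0.mulVec w 0 = 2*w 0 - w 3 - w 4 := by
  simp only [Matrix.mulVec, dotProduct, Fin.sum_univ_six]
  rw [show (P0 0 0:ℤ)=2 from rfl, show (P0 0 1:ℤ)=0 from rfl, show (P0 0 2:ℤ)=0 from rfl, show (P0 0 3:ℤ)=-1 from rfl, show (P0 0 4:ℤ)=-1 from rfl, show (P0 0 5:ℤ)=0 from rfl]
  ring

lemma P0_mv1 (w : Fin 6 → ℤ) : P0.mulVec w 1 = w 0 + w 1 - w 3 - w 4 := by
  simp only [Matrix.mulVec, dotProduct, Fin.sum_univ_six]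
  rw [show (P0 1 0:ℤ)=1 from rfl, show (P0 1 1:ℤ)=1 from rfl, show (P0 1 2:ℤ)=0 from rfl, show (P0 1 3:ℤ)=-1 from rfl, show (P0 1 4:ℤ)=-1 from rfl, show (P0 1 5:ℤ)=0 from rfl]
  ring

lemma P0_mv2 (w : Fin 6 → ℤ) : P0.mulVec w 2 = w 0 + w 2 - w 3 - w 4 := by
  simp only [Matrix.mulVec, dotProduct, Fin.sum_univ_six]
  rw [show (P0 2 0:ℤ)=1 from rfl, show (P0 2 1:ℤ)=0 from rfl, show (P0 2 2:ℤ)=1 from rfl, show (P0 2 3:ℤ)=-1 from rfl, show (P0 2 4:ℤ)=-1 from rfl, show (P0 2 5:ℤ)=0 from rfl]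
  ring

lemma P0_mv3 (w : Fin 6 → ℤ) : P0.mulVec w 3 = w 0 - w 4 := by
  simp only [Matrix.mulVec, dotProduct, Fin.sum_univ_six]
  rw [show (P0 3 0:ℤ)=1 from rfl, show (P0 3 1:ℤ)=0 from rfl, show (P0 3 2:ℤ)=0 from rfl, show (P0 3 3:ℤ)=0 from rfl, show (P0 3 4:ℤ)=-1 from rfl, show (P0 3 5:ℤ)=0 from rfl]
  ring

lemma P0_mv4 (w : Fin 6 → ℤ) : P0.mulVec w 4 = w 0 - w 3 := by
  simp only [Matrix.mulVec, dotProduct, Fin.sum_univ_six]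
  rw [show (P0 4 0:ℤ)=1 from rfl, show (P0 4 1:ℤ)=0 from rfl, show (P0 4 2:ℤ)=0 from rfl, show (P0 4 3:ℤ)=-1 from rfl, show (P0 4 4:ℤ)=0 from rfl, show (P0 4 5:ℤ)=0 from rfl]
  ring

lemma P0_mv5 (w : Fin 6 → ℤ) : P0.mulVec w 5 = 0 := by
  simp only [Matrix.mulVec, dotProduct, Fin.sum_univ_six]
  rw [show (P0 5 0:ℤ)=0 from rfl, show (P0 5 1:ℤ)=0 from rfl, show (P0 5 2:ℤ)=0 from rfl, show (P0 5 3:ℤ)=0 from rfl, show (P0 5 4:ℤ)=0 from rfl, show (P0 5 5:ℤ)=0 from rfl]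
  ring

lemma P1_mv0 (w : Fin 6 → ℤ) : P1.mulVec w 0 = w 0 + w 1 - w 3 - w 5 := by
  simp only [Matrix.mulVec, dotProduct, Fin.sum_univ_six]
  rw [show (P1 0 0:ℤ)=1 from rfl, show (P1 0 1:ℤ)=1 from rfl, show (P1 0 2:ℤ)=0 from rfl, show (P1 0 3:ℤ)=-1 from rfl, show (P1 0 4:ℤ)=0 from rfl, show (P1 0 5:ℤ)=-1 from rfl]
  ring

lemma P1_mv1 (w : Fin 6 → ℤ) : P1.mulVec w 1 = 2*w 1 - w 3 - w 5 := by
  simp only [Matrix.mulVec, dotProduct, Fin.sum_univ_six]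
  rw [show (P1 1 0:ℤ)=0 from rfl, show (P1 1 1:ℤ)=2 from rfl, show (P1 1 2:ℤ)=0 from rfl, show (P1 1 3:ℤ)=-1 from rfl, show (P1 1 4:ℤ)=0 from rfl, show (P1 1 5:ℤ)=-1 from rfl]
  ring

lemma P1_mv2 (w : Fin 6 → ℤ) : P1.mulVec w 2 = w 1 + w 2 - w 3 - w 5 := by
  simp only [Matrix.mulVec, dotProduct, Fin.sum_univ_six]
  rw [show (P1 2 0:ℤ)=0 from rfl, show (P1 2 1:ℤ)=1 from rfl, show (P1 2 2:ℤ)=1 from rfl, show (P1 2 3:ℤ)=-1 from rfl, show (P1 2 4:ℤ)=0 from rfl, show (P1 2 5:ℤ)=-1 from rfl]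
  ring

lemma P1_mv3 (w : Fin 6 → ℤ) : P1.mulVec w 3 = w 1 - w 5 := by
  simp only [Matrix.mulVec, dotProduct, Fin.sum_univ_six]
  rw [show (P1 3 0:ℤ)=0 from rfl, show (P1 3 1:ℤ)=1 from rfl, show (P1 3 2:ℤ)=0 from rfl, show (P1 3 3:ℤ)=0 from rfl, show (P1 3 4:ℤ)=0 from rfl, show (P1 3 5:ℤ)=-1 from rfl]
  ring

lemma P1_mv4 (w : Fin 6 → ℤ) : P1.mulVec w 4 = 0 := by
  simp only [Matrix.mulVec, dotProduct, Fin.sum_univ_six]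
  rw [show (P1 4 0:ℤ)=0 from rfl, show (P1 4 1:ℤ)=0 from rfl, show (P1 4 2:ℤ)=0 from rfl, show (P1 4 3:ℤ)=0 from rfl, show (P1 4 4:ℤ)=0 from rfl, show (P1 4 5:ℤ)=0 from rfl]
  ring

lemma P1_mv5 (w : Fin 6 → ℤ) : P1.mulVec w 5 = w 1 - w 3 := by
  simp only [Matrix.mulVec, dotProduct, Fin.sum_univ_six]
  rw [show (P1 5 0:ℤ)=0 from rfl, show (P1 5 1:ℤ)=1 from rfl, show (P1 5 2:ℤ)=0 from rfl, show (P1 5 3:ℤ)=-1 from rfl, show (P1 5 4:ℤ)=0 from rfl, show (P1 5 5:ℤ)=0 from rfl]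
  ring

lemma P2_mv0 (w : Fin 6 → ℤ) : P2.mulVec w 0 = w 0 + w 2 - w 4 - w 5 := by
  simp only [Matrix.mulVec, dotProduct, Fin.sum_univ_six]
  rw [show (P2 0 0:ℤ)=1 from rfl, show (P2 0 1:ℤ)=0 from rfl, show (P2 0 2:ℤ)=1 from rfl, show (P2 0 3:ℤ)=0 from rfl, show (P2 0 4:ℤ)=-1 from rfl, show (P2 0 5:ℤ)=-1 from rfl]
  ring

lemma P2_mv1 (w : Fin 6 → ℤ) : P2.mulVec w 1 = w 1 + w 2 - w 4 - w 5 := by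
  simp only [Matrix.mulVec, dotProduct, Fin.sum_univ_six]
  rw [show (P2 1 0:ℤ)=0 from rfl, show (P2 1 1:ℤ)=1 from rfl, show (P2 1 2:ℤ)=1 from rfl, show (P2 1 3:ℤ)=0 from rfl, show (P2 1 4:ℤ)=-1 from rfl, show (P2 1 5:ℤ)=-1 from rfl]
  ring

lemma P2_mv2 (w : Fin 6 → ℤ) : P2.mulVec w 2 = 2*w 2 - w 4 - w 5 := by
  simp only [Matrix.mulVec, dotProduct, Fin.sum_univ_six]
  rw [show (P2 2 0:ℤ)=0 from rfl, show (P2 2 1:ℤ)=0 from rfl, show (P2 2 2:ℤ)=2 from rfl, show (P2 2 3:ℤ)=0 from rfl, show (P2 2 4:ℤ)=-1 from rfl, show (P2 2 5:ℤ)=-1 from rfl]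
  ring

lemma P2_mv3 (w : Fin 6 → ℤ) : P2.mulVec w 3 = 0 := by
  simp only [Matrix.mulVec, dotProduct, Fin.sum_univ_six]
  rw [show (P2 3 0:ℤ)=0 from rfl, show (P2 3 1:ℤ)=0 from rfl, show (P2 3 2:ℤ)=0 from rfl, show (P2 3 3:ℤ)=0 from rfl, show (P2 3 4:ℤ)=0 from rfl, show (P2 3 5:ℤ)=0 from rfl]
  ring

lemma P2_mv4 (w : Fin 6 → ℤ) : P2.mulVec w 4 = w 2 - w 5 := by
  simp only [Matrix.mulVec, dotProduct, Fin.sum_univ_six]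
  rw [show (P2 4 0:ℤ)=0 from rfl, show (P2 4 1:ℤ)=0 from rfl, show (P2 4 2:ℤ)=1 from rfl, show (P2 4 3:ℤ)=0 from rfl, show (P2 4 4:ℤ)=0 from rfl, show (P2 4 5:ℤ)=-1 from rfl]
  ring

lemma P2_mv5 (w : Fin 6 → ℤ) : P2.mulVec w 5 = w 2 - w 4 := by
  simp only [Matrix.mulVec, dotProduct, Fin.sum_univ_six]
  rw [show (P2 5 0:ℤ)=0 from rfl, show (P2 5 1:ℤ)=0 from rfl, show (P2 5 2:ℤ)=1 from rfl, show (P2 5 3:ℤ)=0 from rfl, show (P2 5 4:ℤ)=-1 from rfl, show (P2 5 5:ℤ)=0 from rfl]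
  ring

lemma key_inv (v : ℕ → Fin 6 → ℤ)
    (hv0 : v 0 = fun i => if i = 0 then 1 else 0)
    (hv : ∀ i : ℕ, v (i + 1) = (Pseq i).mulVec (v i)) :
    ∀ i : ℕ, v i 1 = v i 2 ∧ v i 1 ≤ v i 0 ∧ (∀ j, 0 ≤ v i j) ∧
      (i % 3 = 0 → v i 3 = 0 ∧ v i 4 ≤ v i 1) ∧
      (i % 3 = 1 → v i 5 = 0 ∧ v i 3 ≤ v i 1) ∧
      (i % 3 = 2 → v i 4 = 0 ∧ v i 5 ≤ v i 1) := by
  intro i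
  induction i with
  | zero =>
    refine ⟨by simp [hv0], by simp [hv0], fun j => ?_, fun _ => by simp [hv0], fun h => by simp at h, fun h => by simp at h⟩
    rw [hv0]; dsimp only; split <;> norm_num
  | succ i ih =>
    obtain ⟨h12, h10, hpos, H0, H1, H2⟩ := ih
    have p0 := hpos 0; have p1 := hpos 1; have p2 := hpos 2
    have p3 := hpos 3; have p4 := hpos 4; have p5 := hpos 5
    rcases (show i % 3 = 0 ∨ i % 3 = 1 ∨ i % 3 = 2 by omega) with h | h | h
    · obtain ⟨hz, hle⟩ := H0 h
      have hP := Pseq_eq0 i h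
      have e0 : v (i+1) 0 = 2*v i 0 - v i 3 - v i 4 := by rw [hv i, hP]; exact P0_mv0 _
      have e1 : v (i+1) 1 = v i 0 + v i 1 - v i 3 - v i 4 := by rw [hv i, hP]; exact P0_mv1 _
      have e2 : v (i+1) 2 = v i 0 + v i 2 - v i 3 - v i 4 := by rw [hv i, hP]; exact P0_mv2 _
      have e3 : v (i+1) 3 = v i 0 - v i 4 := by rw [hv i, hP]; exact P0_mv3 _
      have e4 : v (i+1) 4 = v i 0 - v i 3 := by rw [hv i, hP]; exact P0_mv4 _
      have e5 : v (i+1) 5 = 0 := by rw [hv i, hP]; exact P0_mv5 _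
      have hm : (i+1) % 3 = 1 := by omega
      refine ⟨by omega, by omega, fun j => ?_, fun hh => by omega, fun _ => ⟨by omega, by omega⟩, fun hh => by omega⟩
      fin_cases j <;> [skip; skip; skip; skip; skip; skip] <;>
        first
        | (show (0:ℤ) ≤ v (i+1) 0; omega)
        | (show (0:ℤ) ≤ v (i+1) 1; omega)
        | (show (0:ℤ) ≤ v (i+1) 2; omega)
        | (show (0:ℤ) ≤ v (i+1) 3; omega)
        | (show (0:ℤ) ≤ v (i+1) 4; omega)
        | (show (0:ℤ) ≤ v (i+1) 5; omega)
    · obtain ⟨hz, hle⟩ := H1 h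
      have hP := Pseq_eq1 i h
      have e0 : v (i+1) 0 = v i 0 + v i 1 - v i 3 - v i 5 := by rw [hv i, hP]; exact P1_mv0 _
      have e1 : v (i+1) 1 = 2*v i 1 - v i 3 - v i 5 := by rw [hv i, hP]; exact P1_mv1 _
      have e2 : v (i+1) 2 = v i 1 + v i 2 - v i 3 - v i 5 := by rw [hv i, hP]; exact P1_mv2 _
      have e3 : v (i+1) 3 = v i 1 - v i 5 := by rw [hv i, hP]; exact P1_mv3 _
      have e4 : v (i+1) 4 = 0 := by rw [hv i, hP]; exact P1_mv4 _
      have e5 : v (i+1) 5 = v i 1 - v i 3 := by rw [hv i, hP]; exact P1_mv5 _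
      have hm : (i+1) % 3 = 2 := by omega
      refine ⟨by omega, by omega, fun j => ?_, fun hh => by omega, fun hh => by omega, fun _ => ⟨by omega, by omega⟩⟩
      fin_cases j <;> [skip; skip; skip; skip; skip; skip] <;>
        first
        | (show (0:ℤ) ≤ v (i+1) 0; omega)
        | (show (0:ℤ) ≤ v (i+1) 1; omega)
        | (show (0:ℤ) ≤ v (i+1) 2; omega)
        | (show (0:ℤ) ≤ v (i+1) 3; omega)
        | (show (0:ℤ) ≤ v (i+1) 4; omega)
        | (show (0:ℤ) ≤ v (i+1) 5; omega)
    · obtain ⟨hz, hle⟩ := H2 h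
      have hP := Pseq_eq2 i h
      have e0 : v (i+1) 0 = v i 0 + v i 2 - v i 4 - v i 5 := by rw [hv i, hP]; exact P2_mv0 _
      have e1 : v (i+1) 1 = v i 1 + v i 2 - v i 4 - v i 5 := by rw [hv i, hP]; exact P2_mv1 _
      have e2 : v (i+1) 2 = 2*v i 2 - v i 4 - v i 5 := by rw [hv i, hP]; exact P2_mv2 _
      have e3 : v (i+1) 3 = 0 := by rw [hv i, hP]; exact P2_mv3 _
      have e4 : v (i+1) 4 = v i 2 - v i 5 := by rw [hv i, hP]; exact P2_mv4 _
      have e5 : v (i+1) 5 = v i 2 - v i 4 := by rw [hv i, hP]; exact P2_mv5 _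
      have hm : (i+1) % 3 = 0 := by omega
      refine ⟨by omega, by omega, fun j => ?_, fun _ => ⟨by omega, by omega⟩, fun hh => by omega, fun hh => by omega⟩
      fin_cases j <;> [skip; skip; skip; skip; skip; skip] <;>
        first
        | (show (0:ℤ) ≤ v (i+1) 0; omega)
        | (show (0:ℤ) ≤ v (i+1) 1; omega)
        | (show (0:ℤ) ≤ v (i+1) 2; omega)
        | (show (0:ℤ) ≤ v (i+1) 3; omega)
        | (show (0:ℤ) ≤ v (i+1) 4; omega)
        | (show (0:ℤ) ≤ v (i+1) 5; omega)

/-- Lemma 7.1 (lMatrices): along the orbit of `e₀` under the cyclic products of `P₀, P₁, P₂`,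
the minimal sum `v⁽ⁱ⁺¹⁾_μ + v⁽ⁱ⁺¹⁾_ν` over the index pairs `(μ,ν)` of the monomial generators
of `I_{i+1}` is attained at `(3,4)` for `i ≡ 2`, at `(3,5)` for `i ≡ 0`, and at `(4,5)` for
`i ≡ 1 (mod 3)`. -/
theorem stmt_9 (v : ℕ → Fin 6 → ℤ)
    (hv0 : v 0 = fun i => if i = 0 then 1 else 0)
    (hv : ∀ i : ℕ, v (i + 1) = (Pseq i).mulVec (v i)) :
    ∀ i : ℕ,
      (i % 3 = 2 → ∀ μ ν : Fin 6, S0 μ ν →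
        v (i + 1) 3 + v (i + 1) 4 ≤ v (i + 1) μ + v (i + 1) ν) ∧
      (i % 3 = 0 → ∀ μ ν : Fin 6, S1 μ ν →
        v (i + 1) 3 + v (i + 1) 5 ≤ v (i + 1) μ + v (i + 1) ν) ∧
      (i % 3 = 1 → ∀ μ ν : Fin 6, S2 μ ν →
        v (i + 1) 4 + v (i + 1) 5 ≤ v (i + 1) μ + v (i + 1) ν) := by
  intro i
  obtain ⟨h12, h10, hpos, H0, H1, H2⟩ := key_inv v hv0 hv (i + 1)
  have p0 := hpos 0; have p1 := hpos 1; have p2 := hpos 2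
  have p3 := hpos 3; have p4 := hpos 4; have p5 := hpos 5
  refine ⟨fun h μ ν hS => ?_, fun h μ ν hS => ?_, fun h μ ν hS => ?_⟩
  · obtain ⟨hz, hle⟩ := H0 (by omega)
    rcases hS with ⟨hμ, hν⟩ | ⟨hμ, hν⟩ | ⟨hμ, hν⟩
    · have hμ' : v (i+1) 1 ≤ v (i+1) μ := by
        fin_cases μ <;> simp_all <;> omega
      have hν' : 0 ≤ v (i+1) ν := hpos ν
      omega
    · subst hμ; subst hν; omega
    · subst hμ; subst hν; omega
  · obtain ⟨hz, hle⟩ := H1 (by omega)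
    rcases hS with ⟨hμ, hν⟩ | ⟨hμ, hν⟩ | ⟨hμ, hν⟩
    · have hμ' : v (i+1) 1 ≤ v (i+1) μ := by
        fin_cases μ <;> simp_all <;> omega
      have hν' : 0 ≤ v (i+1) ν := hpos ν
      omega
    · subst hμ; subst hν; omega
    · subst hμ; subst hν; omega
  · obtain ⟨hz, hle⟩ := H2 (by omega)
    rcases hS with ⟨hμ, hν⟩ | ⟨hμ, hν⟩ | ⟨hμ, hν⟩
    · have hμ' : v (i+1) 1 ≤ v (i+1) μ := by
        fin_cases μ <;> simp_all <;> omega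
      have hν' : 0 ≤ v (i+1) ν := hpos ν
      omega
    · subst hμ; subst hν; omega
    · subst hμ; subst hν; omega
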